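/- arXiv:1302.0618 — 8 statements merged into one kernel-verified Lean document; each statement's English description precedes it below -/
import Mathlib

section
/- Constancy lemma: Let d, m ≥ 1, let K ⊆ ℝ^d × ℝ^m be a nonempty compact set, let h : ℝ^d × ℝ^m → ℝ be upper semicontinuous on K, let φ : ℝ^d → ℝ be twice continuously differentiable, and let G ⊆ ℝ^d be a bounded, open, connected set. Assume that for every ζ ∈ G there exists a point (r_ζ, ρ_ζ) ∈ K maximizing H_ζ(r,ρ) := h(r,ρ) − φ(r − ζ) over K and satisfying ∇φ(r_ζ − ζ) = 0. Then the function h_φ(ζ) := sup_{(r,ρ) ∈ K} (h(r,ρ) − φ(r − ζ)) is constant on G. -/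
/-!
If `p = (r, ρ)` maximizes `H_ζ` over `K` with `∇φ(r - ζ) = 0`, then testing `h_φ(ζ')` at the
same point gives `h_φ(ζ) - h_φ(ζ') ≤ φ(r - ζ') - φ(r - ζ) = O(‖ζ - ζ'‖²)`, the constant being
uniform because `r` ranges over a compact set on which `∇φ` is Lipschitz. Applying this at `ζ`
and at `ζ'` shows `|h_φ(ζ) - h_φ(ζ')| = O(‖ζ - ζ'‖²)`, so `h_φ` has zero derivative on `G` and is
constant there since `G` is connected.
-/

open Metric Set Topology Asymptotics

section Calculus

variable {E F : Type*} [NormedAddCommGroup E] [NormedSpace ℝ E]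
  [NormedAddCommGroup F] [NormedSpace ℝ F]

theorem Convex.norm_image_sub_le_of_lipschitzOnWith_fderiv {f : E → F} {s : Set E} {M : NNReal}
    {x y : E} (hs : Convex ℝ s) (hf : ∀ z ∈ s, DifferentiableAt ℝ f z)
    (hlip : LipschitzOnWith M (fderiv ℝ f) s) (hx : x ∈ s) (hy : y ∈ s)
    (hcrit : fderiv ℝ f x = 0) :
    ‖f y - f x‖ ≤ M * ‖y - x‖ ^ 2 := by
  set t := s ∩ closedBall x ‖y - x‖
  have hbound : ∀ z ∈ t, ‖fderiv ℝ f z‖ ≤ M * ‖y - x‖ := fun z ⟨hzs, hzx⟩ => by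
    calc ‖fderiv ℝ f z‖ = ‖fderiv ℝ f z - fderiv ℝ f x‖ := by rw [hcrit, sub_zero]
      _ ≤ M * ‖z - x‖ := by simpa only [← dist_eq_norm] using hlip.dist_le_mul z hzs x hx
      _ ≤ M * ‖y - x‖ := by gcongr; rwa [← dist_eq_norm, ← mem_closedBall]
  calc ‖f y - f x‖ ≤ M * ‖y - x‖ * ‖y - x‖ :=
        (hs.inter (convex_closedBall x _)).norm_image_sub_le_of_norm_fderiv_le
          (fun z hz => hf z hz.1) hbound ⟨hx, mem_closedBall_self (norm_nonneg _)⟩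
          ⟨hy, by rw [mem_closedBall, dist_eq_norm]⟩
    _ = M * ‖y - x‖ ^ 2 := by ring

theorem ContDiff.exists_lipschitzOnWith_fderiv {f : E → F} (hf : ContDiff ℝ 2 f) {s : Set E}
    (hs : IsCompact s) : ∃ M, LipschitzOnWith M (fderiv ℝ f) s :=
  have hf' : ContDiff ℝ 1 (fderiv ℝ f) := hf.fderiv_right le_rfl
  hf'.locallyLipschitz.locallyLipschitzOn.exists_lipschitzOnWith_of_compact hs

theorem HasFDerivAt.of_isBigO_norm_sub_sq {f : E → F} {x : E}
    (hf : (fun y => f y - f x) =O[𝓝 x] fun y => ‖y - x‖ ^ 2) :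
    HasFDerivAt f (0 : E →L[ℝ] F) x :=
  .of_isLittleO <| by
    simpa only [zero_apply, sub_zero] using
      hf.trans_isLittleO (isLittleO_pow_sub_sub x one_lt_two)

end Calculus

theorem sSup_image_sub_sSup_image_le {α : Type*} {K : Set α} {f g : α → ℝ} {p : α}
    (hp : p ∈ K) (hmax : ∀ q ∈ K, f q ≤ f p) (hg : BddAbove (g '' K)) :
    sSup (f '' K) - sSup (g '' K) ≤ f p - g p := by
  have hf : IsGreatest (f '' K) (f p) := ⟨mem_image_of_mem f hp, forall_mem_image.2 hmax⟩
  rw [hf.csSup_eq]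
  linarith [le_csSup hg (mem_image_of_mem g hp)]

section SupConvolution

variable {E Y : Type*} [NormedAddCommGroup E] [NormedSpace ℝ E]
  {K : Set (E × Y)} {h : E × Y → ℝ} {φ : E → ℝ}

/-- The function `h_φ`. -/
noncomputable def supConvolution (K : Set (E × Y)) (h : E × Y → ℝ) (φ : E → ℝ) (ζ : E) : ℝ :=
  sSup ((fun q => h q - φ (q.1 - ζ)) '' K)

def IsCriticalMaximizer (K : Set (E × Y)) (h : E × Y → ℝ) (φ : E → ℝ) (ζ : E) (p : E × Y) :
    Prop :=
  p ∈ K ∧ (∀ q ∈ K, h q - φ (q.1 - ζ) ≤ h p - φ (p.1 - ζ)) ∧ fderiv ℝ φ (p.1 - ζ) = 0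

theorem IsCriticalMaximizer.supConvolution_sub_le {ζ ζ' : E} {p p' : E × Y}
    (hp : IsCriticalMaximizer K h φ ζ p) (hp' : IsCriticalMaximizer K h φ ζ' p') :
    supConvolution K h φ ζ - supConvolution K h φ ζ' ≤ φ (p.1 - ζ') - φ (p.1 - ζ) := by
  have := sSup_image_sub_sSup_image_le hp.1 hp.2.1 ⟨_, forall_mem_image.2 hp'.2.1⟩
  simpa only [supConvolution, sub_sub_sub_cancel_left] using this

theorem abs_supConvolution_sub_le [ProperSpace E] [TopologicalSpace Y] (hK : IsCompact K)
    (hφ : ContDiff ℝ 2 φ) {ζ₀ : E} {r : ℝ}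
    (hmax : ∀ ζ ∈ closedBall ζ₀ r, ∃ p, IsCriticalMaximizer K h φ ζ p) :
    ∃ M : ℝ, ∀ ζ ∈ closedBall ζ₀ r,
      |supConvolution K h φ ζ - supConvolution K h φ ζ₀| ≤ M * ‖ζ - ζ₀‖ ^ 2 := by
  set S := (fun x : (E × Y) × E => x.1.1 - x.2) '' (K ×ˢ closedBall ζ₀ r)
  obtain ⟨M, hM⟩ := hφ.exists_lipschitzOnWith_fderiv <|
    (hK.prod (isCompact_closedBall ζ₀ r)).image (f := fun x : (E × Y) × E => x.1.1 - x.2)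
      (by fun_prop)
  have hquad : ∀ ζ ∈ closedBall ζ₀ r, ∀ ζ' ∈ closedBall ζ₀ r, ∀ p,
      IsCriticalMaximizer K h φ ζ p → φ (p.1 - ζ') - φ (p.1 - ζ) ≤ M * ‖ζ - ζ'‖ ^ 2 := by
    intro ζ hζ ζ' hζ' p hp
    have hball : closedBall (p.1 - ζ₀) r ⊆ S := fun x hx =>
      ⟨(p, p.1 - x), ⟨hp.1, by rwa [mem_closedBall, ← dist_sub_left p.1, sub_sub_cancel]⟩,
        by simp⟩
    have := (convex_closedBall (p.1 - ζ₀) r).norm_image_sub_le_of_lipschitzOnWith_fderiv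
      (fun z _ => (hφ.differentiable two_ne_zero).differentiableAt) (hM.mono hball)
      (by rwa [mem_closedBall, dist_sub_left]) (by rwa [mem_closedBall, dist_sub_left]) hp.2.2
    rw [sub_sub_sub_cancel_left, Real.norm_eq_abs] at this
    exact (le_abs_self _).trans this
  refine ⟨M, fun ζ hζ => ?_⟩
  have hζ₀ : ζ₀ ∈ closedBall ζ₀ r := mem_closedBall_self (dist_nonneg.trans hζ)
  obtain ⟨p, hp⟩ := hmax ζ hζ
  obtain ⟨p₀, hp₀⟩ := hmax ζ₀ hζ₀
  refine abs_sub_le_iff.2 ⟨?_, ?_⟩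
  · exact (hp.supConvolution_sub_le hp₀).trans (hquad ζ hζ ζ₀ hζ₀ p hp)
  · rw [norm_sub_rev]
    exact (hp₀.supConvolution_sub_le hp).trans (hquad ζ₀ hζ₀ ζ hζ p₀ hp₀)

theorem hasFDerivAt_supConvolution [ProperSpace E] [TopologicalSpace Y] (hK : IsCompact K)
    (hφ : ContDiff ℝ 2 φ) {G : Set E} (hG : IsOpen G)
    (hmax : ∀ ζ ∈ G, ∃ p, IsCriticalMaximizer K h φ ζ p) {ζ₀ : E} (hζ₀ : ζ₀ ∈ G) :
    HasFDerivAt (supConvolution K h φ) (0 : E →L[ℝ] ℝ) ζ₀ := by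
  obtain ⟨r, hr, hrG⟩ := nhds_basis_closedBall.mem_iff.1 (hG.mem_nhds hζ₀)
  obtain ⟨M, hM⟩ := abs_supConvolution_sub_le hK hφ fun ζ hζ => hmax ζ (hrG hζ)
  refine .of_isBigO_norm_sub_sq <| .of_bound M ?_
  filter_upwards [closedBall_mem_nhds ζ₀ hr] with ζ hζ
  simpa only [Real.norm_eq_abs, abs_pow, abs_norm] using hM ζ hζ

end SupConvolution

theorem constancy_lemma_general (d m : ℕ)
    (K : Set (EuclideanSpace ℝ (Fin d) × EuclideanSpace ℝ (Fin m)))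
    (hKc : IsCompact K)
    (h : EuclideanSpace ℝ (Fin d) × EuclideanSpace ℝ (Fin m) → ℝ)
    (φ : EuclideanSpace ℝ (Fin d) → ℝ) (hφ : ContDiff ℝ 2 φ)
    (G : Set (EuclideanSpace ℝ (Fin d)))
    (hGo : IsOpen G) (hGc : IsConnected G)
    (hmax : ∀ ζ ∈ G, ∃ p ∈ K,
      (∀ q ∈ K, h q - φ (q.1 - ζ) ≤ h p - φ (p.1 - ζ)) ∧
      fderiv ℝ φ (p.1 - ζ) = 0) :
    ∀ ζ₁ ∈ G, ∀ ζ₂ ∈ G,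
      sSup ((fun q => h q - φ (q.1 - ζ₁)) '' K) =
        sSup ((fun q => h q - φ (q.1 - ζ₂)) '' K) := by
  intro ζ₁ hζ₁ ζ₂ hζ₂
  have hderiv : ∀ ζ ∈ G, HasFDerivAt (supConvolution K h φ) 0 ζ :=
    fun ζ => hasFDerivAt_supConvolution hKc hφ hGo hmax
  exact hGo.is_const_of_fderiv_eq_zero hGc.isPreconnected
    (fun ζ hζ => (hderiv ζ hζ).differentiableAt.differentiableWithinAt)
    (fun ζ hζ => (hderiv ζ hζ).fderiv) hζ₁ hζ₂

/-- **Constancy lemma.** If for every `ζ` in a bounded open connected set `G` the function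
`H_ζ(r,ρ) = h(r,ρ) - φ(r - ζ)` attains its maximum over the nonempty compact set `K` at a
point where `∇φ(r - ζ) = 0`, then `ζ ↦ sup_K H_ζ` is constant on `G`. -/
theorem constancy_lemma (d m : ℕ) (hd : 1 ≤ d) (hm : 1 ≤ m)
    (K : Set (EuclideanSpace ℝ (Fin d) × EuclideanSpace ℝ (Fin m)))
    (hKne : K.Nonempty) (hKc : IsCompact K)
    (h : EuclideanSpace ℝ (Fin d) × EuclideanSpace ℝ (Fin m) → ℝ)
    (hh : UpperSemicontinuousOn h K)
    (φ : EuclideanSpace ℝ (Fin d) → ℝ) (hφ : ContDiff ℝ 2 φ)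
    (G : Set (EuclideanSpace ℝ (Fin d)))
    (hGo : IsOpen G) (hGb : Bornology.IsBounded G) (hGc : IsConnected G)
    (hmax : ∀ ζ ∈ G, ∃ p ∈ K,
      (∀ q ∈ K, h q - φ (q.1 - ζ) ≤ h p - φ (p.1 - ζ)) ∧
      fderiv ℝ φ (p.1 - ζ) = 0) :
    ∀ ζ₁ ∈ G, ∀ ζ₂ ∈ G,
      sSup ((fun q => h q - φ (q.1 - ζ₁)) '' K) =
        sSup ((fun q => h q - φ (q.1 - ζ₂)) '' K) :=
  constancy_lemma_general d m K hKc h φ hφ G hGo hGc hmax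
end

section
/- Let n ≥ 1 and T > 0. Let u, v : ℝ^n × [0,T] → ℝ be bounded and ℤ^n-periodic in the space variable, with u upper semicontinuous, v lower semicontinuous, and u(x,0) ≤ v(x,0) for all x ∈ ℝ^n. Assume m₀ := sup_{x,t} (u(x,t) − v(x,t)) > 0, and set M := sup_{x,t,y,s} (u(x,t) − v(y,s)), m₀' := (7/8) m₀ and κ(ε) := (1/2)(ε (m₀ − m₀'))^{1/2}. Then there exist positive constants ε₀, σ₀, γ₀ such that for every ε ∈ (0,ε₀), σ ∈ (0,σ₀), γ ∈ (0,γ₀) and every ζ ∈ ℝ^n with ‖ζ‖ ≤ κ(ε): (a) sup Φ_ζ > m₀' (supremum over x,y ∈ ℝ^n, t,s ∈ [0,T)); and (b) every maximizer (x,t,y,s) of Φ_ζ over ℝ^n × [0,T) × ℝ^n × [0,T) satisfies t > 0, s > 0, |t − s| ≤ (2Mσ)^{1/2} and d(x − y − ζ) ≤ (2Mε)^{1/2}. -/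
noncomputable section

/-- The vector in `ℝⁿ` with integer coordinates `k`. -/
def intVec (n : ℕ) (k : Fin n → ℤ) : EuclideanSpace ℝ (Fin n) :=
  WithLp.toLp 2 (fun i => (k i : ℝ))

/-- Torus distance: `d(x) := inf_{k ∈ ℤⁿ} ‖x + k‖`. -/
def torusDist (n : ℕ) (x : EuclideanSpace ℝ (Fin n)) : ℝ :=
  ⨅ k : Fin n → ℤ, ‖x + intVec n k‖

/-- `S(t,s) := |t-s|²/(2σ) + γ/(T-t) + γ/(T-s)`. -/
def Sfun (T σ γ t s : ℝ) : ℝ :=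
  |t - s| ^ 2 / (2 * σ) + γ / (T - t) + γ / (T - s)

/-- `Φ_ζ(x,t,y,s) := u(x,t) - v(y,s) - d(x-y-ζ)²/(2ε) - S(t,s)`. -/
def Phi (n : ℕ) (u v : EuclideanSpace ℝ (Fin n) × ℝ → ℝ) (T ε σ γ : ℝ)
    (ζ x : EuclideanSpace ℝ (Fin n)) (t : ℝ) (y : EuclideanSpace ℝ (Fin n)) (s : ℝ) : ℝ :=
  u (x, t) - v (y, s) - torusDist n (x - y - ζ) ^ 2 / (2 * ε) - Sfun T σ γ t s

/-!
Upper semicontinuity of `u`, lower semicontinuity of `v` and `u ≤ v` at `t = 0`, together with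
compactness of a fundamental domain of `ℤⁿ` (tube lemma), give `r > 0` such that
`u(x, t) - v(y, s) < 7/8 m₀` whenever `t, s < r` and `d(x - y) < r`. Testing `Φ_ζ` on the diagonal
at a point where `u - v > 15/16 m₀` shows `sup Φ_ζ > 7/8 m₀` once `ε, γ` are small and
`‖ζ‖ ≤ κ(ε)`. At a maximizer `Φ_ζ ≥ 0`, so each penalty is at most `M`; for small `ε, σ` this
forces `|t - s| < r` and `d(x - y) < r`, and then `t = 0` or `s = 0` would give
`Φ_ζ ≤ u - v < 7/8 m₀`.
-/

open Filter Topology Set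

lemma intVec_sub (n : ℕ) (a b : Fin n → ℤ) : intVec n (a - b) = intVec n a - intVec n b := by
  ext i
  simp [intVec]

lemma intVec_zero (n : ℕ) : intVec n 0 = 0 := by
  ext i
  simp [intVec]

lemma torusDist_nonneg (n : ℕ) (x : EuclideanSpace ℝ (Fin n)) : 0 ≤ torusDist n x :=
  le_ciInf fun _ => norm_nonneg _

lemma torusDist_le (n : ℕ) (x : EuclideanSpace ℝ (Fin n)) (k : Fin n → ℤ) :
    torusDist n x ≤ ‖x + intVec n k‖ :=
  ciInf_le ⟨0, by rintro _ ⟨k, rfl⟩; exact norm_nonneg _⟩ k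

lemma torusDist_le_norm (n : ℕ) (x : EuclideanSpace ℝ (Fin n)) : torusDist n x ≤ ‖x‖ := by
  simpa [intVec_zero] using torusDist_le n x 0

lemma torusDist_add_le (n : ℕ) (x z : EuclideanSpace ℝ (Fin n)) :
    torusDist n (x + z) ≤ torusDist n x + ‖z‖ := by
  rw [← sub_le_iff_le_add]
  refine le_ciInf fun k => sub_le_iff_le_add.2 ?_
  calc torusDist n (x + z) ≤ ‖x + intVec n k + z‖ := by
        rw [add_right_comm]; exact torusDist_le n _ k
    _ ≤ ‖x + intVec n k‖ + ‖z‖ := norm_add_le _ _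

lemma exists_norm_add_intVec_le_sqrt (n : ℕ) (x : EuclideanSpace ℝ (Fin n)) :
    ∃ k : Fin n → ℤ, ‖x + intVec n k‖ ≤ √n := by
  refine ⟨fun i => -⌊x i⌋, ?_⟩
  rw [EuclideanSpace.norm_eq]
  refine Real.sqrt_le_sqrt ?_
  calc ∑ i, ‖(x + intVec n fun i => -⌊x i⌋) i‖ ^ 2 ≤ ∑ _i : Fin n, (1 : ℝ) := by
        refine Finset.sum_le_sum fun i _ => ?_
        have hfract : (x + intVec n fun i => -⌊x i⌋) i = Int.fract (x i) := by
          simp [intVec, Int.fract, sub_eq_add_neg]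
        rw [hfract, Real.norm_eq_abs, sq_abs]
        nlinarith [Int.fract_nonneg (x i), Int.fract_lt_one (x i)]
    _ = n := by simp

lemma IsCompact.eventually_forall_sub_lt {E τ : Type*} [TopologicalSpace E] [AddGroup E]
    [IsTopologicalAddGroup E] [TopologicalSpace τ] {u v : E × τ → ℝ} {I : Set τ} {t₀ : τ}
    {K : Set E} {θ : ℝ} (hK : IsCompact K) (husc : UpperSemicontinuousOn u (univ ×ˢ I))
    (hvsc : LowerSemicontinuousOn v (univ ×ˢ I)) (ht₀ : t₀ ∈ I)
    (hθ : ∀ x ∈ K, u (x, t₀) - v (x, t₀) < θ) :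
    ∀ᶠ p : E × τ × τ in 𝓝 (0, t₀, t₀), ∀ x ∈ K,
      p.2.1 ∈ I → p.2.2 ∈ I → u (x, p.2.1) - v (x - p.1, p.2.2) < θ := by
  refine hK.eventually_forall_of_forall_eventually fun x hx => ?_
  set δ := θ - (u (x, t₀) - v (x, t₀))
  have hδ : 0 < δ := sub_pos.2 (hθ x hx)
  have hu := eventually_nhdsWithin_iff.1 <|
    husc (x, t₀) ⟨trivial, ht₀⟩ _ (lt_add_of_pos_right _ (half_pos hδ))
  have hv := eventually_nhdsWithin_iff.1 <|
    hvsc (x, t₀) ⟨trivial, ht₀⟩ _ (sub_lt_self _ (half_pos hδ))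
  have hu' : Tendsto (fun q : (E × τ × τ) × E => (q.2, q.1.2.1)) (𝓝 ((0, t₀, t₀), x))
      (𝓝 (x, t₀)) := (by fun_prop : Continuous _).tendsto' _ _ rfl
  have hv' : Tendsto (fun q : (E × τ × τ) × E => (q.2 - q.1.1, q.1.2.2)) (𝓝 ((0, t₀, t₀), x))
      (𝓝 (x, t₀)) := (by fun_prop : Continuous _).tendsto' _ _ (by simp)
  filter_upwards [hu'.eventually hu, hv'.eventually hv] with q hqu hqv hI₁ hI₂
  have := hqu ⟨trivial, hI₁⟩
  have := hqv ⟨trivial, hI₂⟩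
  linarith

/-- Periodicity moves `x` into the compact ball of radius `√n`, where the tube lemma applies. -/
lemma exists_pos_forall_sub_lt_of_torusDist_lt {n : ℕ} {τ : Type*} [PseudoMetricSpace τ]
    {u v : EuclideanSpace ℝ (Fin n) × τ → ℝ} {I : Set τ} {t₀ : τ} {θ : ℝ}
    (huper : ∀ x k t, u (x + intVec n k, t) = u (x, t))
    (hvper : ∀ x k t, v (x + intVec n k, t) = v (x, t))
    (husc : UpperSemicontinuousOn u (univ ×ˢ I)) (hvsc : LowerSemicontinuousOn v (univ ×ˢ I))
    (ht₀ : t₀ ∈ I) (hθ : ∀ x, u (x, t₀) - v (x, t₀) < θ) :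
    ∃ r > 0, ∀ x y t s, t ∈ I → s ∈ I → dist t t₀ < r → dist s t₀ < r →
      torusDist n (x - y) < r → u (x, t) - v (y, s) < θ := by
  obtain ⟨r, hr, hnear⟩ := Metric.eventually_nhds_iff.1 <|
    (isCompact_closedBall 0 √n).eventually_forall_sub_lt husc hvsc ht₀ fun x _ => hθ x
  refine ⟨r, hr, fun x y t s ht hs htr hsr hxy => ?_⟩
  obtain ⟨j, hj⟩ := exists_norm_add_intVec_le_sqrt n x
  obtain ⟨k, hk⟩ := exists_lt_of_ciInf_lt hxy
  have hdist : dist (x - y + intVec n k, t, s) (0, t₀, t₀) < r := by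
    simpa [Prod.dist_eq, dist_zero_right] using ⟨hk, htr, hsr⟩
  have hy : x + intVec n j - (x - y + intVec n k) = y + intVec n (j - k) := by
    rw [intVec_sub]; abel
  simpa [huper, hy, hvper] using hnear hdist _ (mem_closedBall_zero_iff.2 hj) ht hs

variable {n : ℕ} {u v : EuclideanSpace ℝ (Fin n) × ℝ → ℝ} {T ε σ γ : ℝ}
  {ζ x y : EuclideanSpace ℝ (Fin n)} {t s : ℝ}

lemma penalty_add_le_sub_Phi (hγ : 0 ≤ γ) (ht : t ≤ T) (hs : s ≤ T) :
    torusDist n (x - y - ζ) ^ 2 / (2 * ε) + |t - s| ^ 2 / (2 * σ) ≤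
      u (x, t) - v (y, s) - Phi n u v T ε σ γ ζ x t y s := by
  have : 0 ≤ γ / (T - t) := div_nonneg hγ (sub_nonneg.2 ht)
  have : 0 ≤ γ / (T - s) := div_nonneg hγ (sub_nonneg.2 hs)
  simp only [Phi, Sfun]
  linarith

lemma Phi_le_sub (hε : 0 ≤ ε) (hσ : 0 ≤ σ) (hγ : 0 ≤ γ) (ht : t ≤ T) (hs : s ≤ T) :
    Phi n u v T ε σ γ ζ x t y s ≤ u (x, t) - v (y, s) :=
  sub_nonneg.1 <| (add_nonneg (by positivity) (by positivity)).trans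
    (penalty_add_le_sub_Phi hγ ht hs)

lemma sub_sub_le_Phi_diag (hε : 0 ≤ ε) :
    u (x, t) - v (x, t) - ‖ζ‖ ^ 2 / (2 * ε) - 2 * γ / (T - t) ≤ Phi n u v T ε σ γ ζ x t x t := by
  have hd : torusDist n (-ζ) ^ 2 / (2 * ε) ≤ ‖ζ‖ ^ 2 / (2 * ε) := by
    gcongr
    · exact torusDist_nonneg n _
    · simpa using torusDist_le_norm n (-ζ)
  simp only [Phi, Sfun, sub_self, zero_sub, abs_zero, ne_eq, OfNat.ofNat_ne_zero,
    not_false_eq_true, zero_pow, zero_div, zero_add]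
  linarith [show 2 * γ / (T - t) = γ / (T - t) + γ / (T - t) by ring]

lemma lt_Phi_diag {m : ℝ} (hm : 0 < m) (hε : 0 < ε) (ht : t < T)
    (huv : 15 / 16 * m < u (x, t) - v (x, t)) (hζ : ‖ζ‖ ^ 2 ≤ ε * m / 32)
    (hγ : γ < m * (T - t) / 64) :
    7 / 8 * m < Phi n u v T ε σ γ ζ x t x t := by
  refine (sub_sub_le_Phi_diag hε.le).trans_lt' ?_
  have hζterm : ‖ζ‖ ^ 2 / (2 * ε) ≤ m / 64 := by
    rw [div_le_iff₀ (by positivity)]; linarith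
  have hγterm : 2 * γ / (T - t) < m / 32 := by
    rw [div_lt_iff₀ (sub_pos.2 ht)]; linarith
  linarith

lemma le_sqrt_of_sq_div_le {a c M : ℝ} (ha : 0 ≤ a) (hc : 0 < c) (h : a ^ 2 / (2 * c) ≤ M) :
    a ≤ √(2 * M * c) := by
  rw [div_le_iff₀ (by positivity)] at h
  exact (Real.le_sqrt ha (by nlinarith)).2 (by linarith)

lemma torusDist_le_sqrt_and_abs_sub_le_sqrt_of_nonneg_Phi {M : ℝ} (hε : 0 < ε) (hσ : 0 < σ)
    (hγ : 0 ≤ γ) (ht : t ≤ T) (hs : s ≤ T) (hΦ : 0 ≤ Phi n u v T ε σ γ ζ x t y s)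
    (hM : u (x, t) - v (y, s) ≤ M) :
    torusDist n (x - y - ζ) ≤ √(2 * M * ε) ∧ |t - s| ≤ √(2 * M * σ) := by
  have hpen := (penalty_add_le_sub_Phi hγ ht hs).trans ((sub_le_self _ hΦ).trans hM)
  have : 0 ≤ torusDist n (x - y - ζ) ^ 2 / (2 * ε) := by positivity
  have : 0 ≤ |t - s| ^ 2 / (2 * σ) := by positivity
  exact ⟨le_sqrt_of_sq_div_le (torusDist_nonneg n _) hε (by linarith),
    le_sqrt_of_sq_div_le (abs_nonneg _) hσ (by linarith)⟩

lemma sq_le_div_four_of_le_sqrt_div_two {a b : ℝ} (hb : 0 ≤ b) (h : a ≤ √b / 2) (ha : 0 ≤ a) :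
    a ^ 2 ≤ b / 4 := by
  nlinarith [Real.sq_sqrt hb, Real.sqrt_nonneg b]

lemma pos_and_penalty_bounds_of_lt_Phi {M θ r : ℝ} (hr : 0 < r) (hε : 0 < ε) (hσ : 0 < σ)
    (hγ : 0 ≤ γ) (ht : t ∈ Icc 0 T) (hs : s ∈ Icc 0 T) (hθ : 0 ≤ θ)
    (hΦ : θ < Phi n u v T ε σ γ ζ x t y s)
    (hM : u (x, t) - v (y, s) ≤ M) (hσr : 2 * M * σ < r ^ 2) (hεr : 8 * M * ε < r ^ 2)
    (hζ : ‖ζ‖ ≤ √(2 * M * ε))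
    (hnear : dist t 0 < r → dist s 0 < r → torusDist n (x - y) < r → u (x, t) - v (y, s) < θ) :
    0 < t ∧ 0 < s ∧ |t - s| ≤ √(2 * M * σ) ∧ torusDist n (x - y - ζ) ≤ √(2 * M * ε) := by
  obtain ⟨hd, hts⟩ := torusDist_le_sqrt_and_abs_sub_le_sqrt_of_nonneg_Phi hε hσ hγ ht.2 hs.2
    (by linarith) hM
  have hts' := abs_sub_lt_iff.1 (hts.trans_lt ((Real.sqrt_lt' hr).2 hσr))
  have hεr' : √(2 * M * ε) < r / 2 := (Real.sqrt_lt' (half_pos hr)).2 (by linarith)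
  have hxy : torusDist n (x - y) < r := calc
    torusDist n (x - y) = torusDist n (x - y - ζ + ζ) := by rw [sub_add_cancel]
    _ ≤ torusDist n (x - y - ζ) + ‖ζ‖ := torusDist_add_le n _ _
    _ < r := by linarith
  have hΦle : Phi n u v T ε σ γ ζ x t y s ≤ u (x, t) - v (y, s) :=
    Phi_le_sub hε.le hσ.le hγ ht.2 hs.2
  have hfar : ¬(t < r ∧ s < r) := fun ⟨htr, hsr⟩ => by
    have := hnear (by simpa [abs_of_nonneg ht.1]) (by simpa [abs_of_nonneg hs.1]) hxy
    linarith
  exact ⟨lt_of_not_ge fun _ => hfar ⟨by linarith, by linarith⟩,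
    lt_of_not_ge fun _ => hfar ⟨by linarith, by linarith⟩, hts, hd⟩

theorem small_constants_general (n : ℕ) (T : ℝ) (hT : 0 < T)
    (u v : EuclideanSpace ℝ (Fin n) × ℝ → ℝ)
    (hub : ∃ C : ℝ, ∀ x : EuclideanSpace ℝ (Fin n), ∀ t ∈ Set.Icc (0 : ℝ) T, |u (x, t)| ≤ C)
    (hvb : ∃ C : ℝ, ∀ x : EuclideanSpace ℝ (Fin n), ∀ t ∈ Set.Icc (0 : ℝ) T, |v (x, t)| ≤ C)
    (huper : ∀ (x : EuclideanSpace ℝ (Fin n)) (k : Fin n → ℤ) (t : ℝ),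
      u (x + intVec n k, t) = u (x, t))
    (hvper : ∀ (x : EuclideanSpace ℝ (Fin n)) (k : Fin n → ℤ) (t : ℝ),
      v (x + intVec n k, t) = v (x, t))
    (husc : UpperSemicontinuousOn u (Set.univ ×ˢ Set.Icc (0 : ℝ) T))
    (hvsc : LowerSemicontinuousOn v (Set.univ ×ˢ Set.Icc (0 : ℝ) T))
    (hinit : ∀ x : EuclideanSpace ℝ (Fin n), u (x, 0) ≤ v (x, 0))
    (m₀ M : ℝ)
    (hm₀ : m₀ = sSup {r : ℝ | ∃ x : EuclideanSpace ℝ (Fin n), ∃ t ∈ Set.Ioo (0 : ℝ) T,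
      r = u (x, t) - v (x, t)})
    (hm₀pos : 0 < m₀)
    (hM : M = sSup {r : ℝ | ∃ x y : EuclideanSpace ℝ (Fin n), ∃ t ∈ Set.Icc (0 : ℝ) T,
      ∃ s ∈ Set.Icc (0 : ℝ) T, r = u (x, t) - v (y, s)}) :
    ∃ ε₀ > (0 : ℝ), ∃ σ₀ > (0 : ℝ), ∃ γ₀ > (0 : ℝ),
      ∀ ε ∈ Set.Ioo 0 ε₀, ∀ σ ∈ Set.Ioo 0 σ₀, ∀ γ ∈ Set.Ioo 0 γ₀,
      ∀ ζ : EuclideanSpace ℝ (Fin n), ‖ζ‖ ≤ Real.sqrt (ε * (m₀ - 7 / 8 * m₀)) / 2 →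
        (7 / 8 * m₀ < sSup {r : ℝ | ∃ x y : EuclideanSpace ℝ (Fin n),
            ∃ t ∈ Set.Ico (0 : ℝ) T, ∃ s ∈ Set.Ico (0 : ℝ) T,
            r = Phi n u v T ε σ γ ζ x t y s}) ∧
        (∀ (x y : EuclideanSpace ℝ (Fin n)), ∀ t ∈ Set.Ico (0 : ℝ) T, ∀ s ∈ Set.Ico (0 : ℝ) T,
          (∀ (x' y' : EuclideanSpace ℝ (Fin n)), ∀ t' ∈ Set.Ico (0 : ℝ) T,
            ∀ s' ∈ Set.Ico (0 : ℝ) T,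
            Phi n u v T ε σ γ ζ x' t' y' s' ≤ Phi n u v T ε σ γ ζ x t y s) →
          0 < t ∧ 0 < s ∧ |t - s| ≤ Real.sqrt (2 * M * σ) ∧
            torusDist n (x - y - ζ) ≤ Real.sqrt (2 * M * ε)) := by
  obtain ⟨Cu, hCu⟩ := hub
  obtain ⟨Cv, hCv⟩ := hvb
  have hle_M : ∀ x y, ∀ t ∈ Icc 0 T, ∀ s ∈ Icc 0 T, u (x, t) - v (y, s) ≤ M := by
    refine fun x y t ht s hs => hM ▸ le_csSup ⟨Cu + Cv, ?_⟩ ⟨x, y, t, ht, s, hs, rfl⟩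
    rintro _ ⟨x, y, t, ht, s, hs, rfl⟩
    linarith [(abs_le.1 (hCu x t ht)).2, (abs_le.1 (hCv y s hs)).1]
  have hlt : 15 / 16 * m₀ < m₀ := by linarith
  nth_rewrite 2 [hm₀] at hlt
  obtain ⟨_, ⟨xh, th, hth, rfl⟩, hxh⟩ :=
    exists_lt_of_lt_csSup (by exact ⟨_, 0, T / 2, ⟨half_pos hT, half_lt_self hT⟩, rfl⟩) hlt
  have hthT : th ∈ Icc 0 T := ⟨hth.1.le, hth.2.le⟩
  have hm₀M : 15 / 16 * m₀ < M := hxh.trans_le (hle_M xh xh th hthT th hthT)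
  have hMpos : 0 < M := by linarith
  obtain ⟨r, hr, hnear⟩ := exists_pos_forall_sub_lt_of_torusDist_lt (t₀ := 0) (θ := 7 / 8 * m₀)
    huper hvper husc hvsc ⟨le_rfl, hT.le⟩ fun x => by linarith [hinit x]
  -- `8Mε < r²` and `2Mσ < r²` push `d(x - y)` and `|t - s|` below `r`; `γ₀` keeps
  -- `2γ / (T - th) < m₀ / 32`
  refine ⟨r ^ 2 / (8 * M), by positivity, r ^ 2 / (2 * M), by positivity,
    m₀ * (T - th) / 64, by nlinarith [hth.2], ?_⟩
  rintro ε ⟨hε, hεε⟩ σ ⟨hσ, hσσ⟩ γ ⟨hγ, hγγ⟩ ζ hζ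
  have hζsq : ‖ζ‖ ^ 2 ≤ ε * m₀ / 32 := by
    linarith [sq_le_div_four_of_le_sqrt_div_two (mul_nonneg hε.le (by linarith)) hζ (norm_nonneg ζ)]
  have htest : 7 / 8 * m₀ < Phi n u v T ε σ γ ζ xh th xh th :=
    lt_Phi_diag hm₀pos hε hth.2 hxh hζsq hγγ
  have hthIco : th ∈ Ico 0 T := ⟨hth.1.le, hth.2⟩
  refine ⟨htest.trans_le (le_csSup ⟨M, ?_⟩ ⟨xh, xh, th, hthIco, th, hthIco, rfl⟩), ?_⟩
  · rintro _ ⟨x, y, t, ht, s, hs, rfl⟩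
    exact (Phi_le_sub hε.le hσ.le hγ.le ht.2.le hs.2.le).trans
      (hle_M x y t ⟨ht.1, ht.2.le⟩ s ⟨hs.1, hs.2.le⟩)
  intro x y t ht s hs hmax
  have ht' : t ∈ Icc 0 T := ⟨ht.1, ht.2.le⟩
  have hs' : s ∈ Icc 0 T := ⟨hs.1, hs.2.le⟩
  refine pos_and_penalty_bounds_of_lt_Phi hr hε hσ hγ.le ht' hs' (by positivity)
    (htest.trans_le (hmax xh xh th hthIco th hthIco)) (hle_M x y t ht' s hs') ?_ ?_
    ((Real.le_sqrt (norm_nonneg _) (by positivity)).2 (by nlinarith)) (hnear x y t s ht' hs')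
  · rwa [lt_div_iff₀ (by positivity), mul_comm] at hσσ
  · rwa [lt_div_iff₀ (by positivity), mul_comm] at hεε

/-- Basic properties of maximizers of `Φ_ζ` for small parameters `ε, σ, γ` and shifts `ζ`. -/
theorem small_constants (n : ℕ) (hn : 1 ≤ n) (T : ℝ) (hT : 0 < T)
    (u v : EuclideanSpace ℝ (Fin n) × ℝ → ℝ)
    (hub : ∃ C : ℝ, ∀ x : EuclideanSpace ℝ (Fin n), ∀ t ∈ Set.Icc (0 : ℝ) T, |u (x, t)| ≤ C)
    (hvb : ∃ C : ℝ, ∀ x : EuclideanSpace ℝ (Fin n), ∀ t ∈ Set.Icc (0 : ℝ) T, |v (x, t)| ≤ C)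
    (huper : ∀ (x : EuclideanSpace ℝ (Fin n)) (k : Fin n → ℤ) (t : ℝ),
      u (x + intVec n k, t) = u (x, t))
    (hvper : ∀ (x : EuclideanSpace ℝ (Fin n)) (k : Fin n → ℤ) (t : ℝ),
      v (x + intVec n k, t) = v (x, t))
    (husc : UpperSemicontinuousOn u (Set.univ ×ˢ Set.Icc (0 : ℝ) T))
    (hvsc : LowerSemicontinuousOn v (Set.univ ×ˢ Set.Icc (0 : ℝ) T))
    (hinit : ∀ x : EuclideanSpace ℝ (Fin n), u (x, 0) ≤ v (x, 0))
    (m₀ M : ℝ)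
    (hm₀ : m₀ = sSup {r : ℝ | ∃ x : EuclideanSpace ℝ (Fin n), ∃ t ∈ Set.Ioo (0 : ℝ) T,
      r = u (x, t) - v (x, t)})
    (hm₀pos : 0 < m₀)
    (hM : M = sSup {r : ℝ | ∃ x y : EuclideanSpace ℝ (Fin n), ∃ t ∈ Set.Icc (0 : ℝ) T,
      ∃ s ∈ Set.Icc (0 : ℝ) T, r = u (x, t) - v (y, s)}) :
    ∃ ε₀ > (0 : ℝ), ∃ σ₀ > (0 : ℝ), ∃ γ₀ > (0 : ℝ),
      ∀ ε ∈ Set.Ioo 0 ε₀, ∀ σ ∈ Set.Ioo 0 σ₀, ∀ γ ∈ Set.Ioo 0 γ₀,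
      ∀ ζ : EuclideanSpace ℝ (Fin n), ‖ζ‖ ≤ Real.sqrt (ε * (m₀ - 7 / 8 * m₀)) / 2 →
        (7 / 8 * m₀ < sSup {r : ℝ | ∃ x y : EuclideanSpace ℝ (Fin n),
            ∃ t ∈ Set.Ico (0 : ℝ) T, ∃ s ∈ Set.Ico (0 : ℝ) T,
            r = Phi n u v T ε σ γ ζ x t y s}) ∧
        (∀ (x y : EuclideanSpace ℝ (Fin n)), ∀ t ∈ Set.Ico (0 : ℝ) T, ∀ s ∈ Set.Ico (0 : ℝ) T,
          (∀ (x' y' : EuclideanSpace ℝ (Fin n)), ∀ t' ∈ Set.Ico (0 : ℝ) T,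
            ∀ s' ∈ Set.Ico (0 : ℝ) T,
            Phi n u v T ε σ γ ζ x' t' y' s' ≤ Phi n u v T ε σ γ ζ x t y s) →
          0 < t ∧ 0 < s ∧ |t - s| ≤ Real.sqrt (2 * M * σ) ∧
            torusDist n (x - y - ζ) ≤ Real.sqrt (2 * M * ε)) :=
  small_constants_general n T hT u v hub hvb huper hvper husc hvsc hinit m₀ M hm₀ hm₀pos hM
end
end

section
/- Covering lemma for the facet construction: Let n ≥ 1, r > 0 and λ := 20r. Let U ⊆ ℝ^n be nonempty and V ⊆ ℝ^n. Set Z := closure(U \ V^{15r}) and X := { x ∈ ℝ^n : ‖x − y‖ ≥ r for all y ∈ U }. Suppose G, H ⊆ ℝ^n satisfy Z^{3r} ⊆ G and U^{5r} ⊆ H. Then G^{−2r} ∪ X ∪ V^{λ} = ℝ^n and H^{−r} ∪ X = ℝ^n. -/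
/-- Dilation: `A^ρ = { a + h : a ∈ A, ‖h‖ ≤ ρ }`. -/
def dil {n : ℕ} (A : Set (EuclideanSpace ℝ (Fin n))) (ρ : ℝ) :
    Set (EuclideanSpace ℝ (Fin n)) :=
  {y | ∃ a ∈ A, ∃ h : EuclideanSpace ℝ (Fin n), ‖h‖ ≤ ρ ∧ y = a + h}

/-- Erosion: `A^{-ρ} = { x ∈ A : closedBall x ρ ⊆ A }`. -/
def ero {n : ℕ} (A : Set (EuclideanSpace ℝ (Fin n))) (ρ : ℝ) :
    Set (EuclideanSpace ℝ (Fin n)) :=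
  {x | x ∈ A ∧ Metric.closedBall x ρ ⊆ A}

lemma mem_dil {n : ℕ} {A : Set (EuclideanSpace ℝ (Fin n))} {ρ : ℝ}
    {a y : EuclideanSpace ℝ (Fin n)} (ha : a ∈ A) (h : ‖y - a‖ ≤ ρ) :
    y ∈ dil A ρ :=
  ⟨a, ha, y - a, h, by abel⟩

/-- Covering lemma for the facet construction:
`G^{-2r} ∪ X ∪ V^{20r} = ℝⁿ` and `H^{-r} ∪ X = ℝⁿ`. -/
theorem covering_lemma (n : ℕ) (hn : 1 ≤ n) (r : ℝ) (hr : 0 < r)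
    (U V : Set (EuclideanSpace ℝ (Fin n))) (hU : U.Nonempty)
    (G H : Set (EuclideanSpace ℝ (Fin n)))
    (hG : dil (closure (U \ dil V (15 * r))) (3 * r) ⊆ G)
    (hH : dil U (5 * r) ⊆ H) :
    ero G (2 * r) ∪ {x | ∀ y ∈ U, r ≤ ‖x - y‖} ∪ dil V (20 * r) = Set.univ ∧
    ero H r ∪ {x | ∀ y ∈ U, r ≤ ‖x - y‖} = Set.univ := by
  constructor
  · ext x
    simp only [Set.mem_union, Set.mem_univ, iff_true, Set.mem_setOf_eq]
    by_cases hx : ∀ y ∈ U, r ≤ ‖x - y‖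
    · exact Or.inl (Or.inr hx)
    · push_neg at hx
      obtain ⟨u, hu, hxu⟩ := hx
      by_cases hv : x ∈ dil V (20 * r)
      · exact Or.inr hv
      · left; left
        have huZ : u ∈ closure (U \ dil V (15 * r)) := by
          apply subset_closure
          refine ⟨hu, fun hmem => hv ?_⟩
          obtain ⟨v, hvV, h, hh, rfl⟩ := hmem
          apply mem_dil hvV
          have : ‖x - v‖ ≤ ‖x - (v + h)‖ + ‖h‖ := by
            have := norm_add_le (x - (v + h)) h
            simpa [sub_add_eq_sub_sub] using this
          nlinarith
        have key : ∀ z ∈ Metric.closedBall x (2 * r), z ∈ G := by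
          intro z hz
          rw [Metric.mem_closedBall, dist_eq_norm] at hz
          apply hG
          apply mem_dil huZ
          have : ‖z - u‖ ≤ ‖z - x‖ + ‖x - u‖ := norm_sub_le_norm_sub_add_norm_sub z x u
          linarith
        exact ⟨key x (by simp [Metric.mem_closedBall]; positivity), key⟩
  · ext x
    simp only [Set.mem_union, Set.mem_univ, iff_true, Set.mem_setOf_eq]
    by_cases hx : ∀ y ∈ U, r ≤ ‖x - y‖
    · exact Or.inr hx
    · push_neg at hx
      obtain ⟨u, hu, hxu⟩ := hx
      left
      have key : ∀ z ∈ Metric.closedBall x r, z ∈ H := by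
        intro z hz
        rw [Metric.mem_closedBall, dist_eq_norm] at hz
        apply hH
        apply mem_dil hu
        have : ‖z - u‖ ≤ ‖z - x‖ + ‖x - u‖ := norm_sub_le_norm_sub_add_norm_sub z x u
        linarith
      exact ⟨key x (by simp [Metric.mem_closedBall, hr.le]), key⟩
end

section
/- Let n ≥ 1, u : ℝ^n × ℝ → ℝ, f : ℝ^n → ℝ, g : ℝ → ℝ, (x̂, t̂) ∈ ℝ^n × ℝ and η > 0. Assume f(x̂) = 0 and that the general-position inequality of radius η at (x̂, t̂) holds. Set U := { x : u(x, t̂) ≥ u(x̂, t̂) } and Z := { x : f(x) ≤ 0 }. Then: (a) u(x,t) ≤ g(t) − g(t̂) + u(x̂, t̂) for every x ∈ Z^{η} and every t ∈ [t̂ − η, t̂ + η]; and (b) f(x) ≥ 0 for every x ∈ U^{η}. -/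
/-- If `φ(x,t) = f(x) + g(t)` is in general position of radius `η` with respect to `u` at
`(x̂,t̂)` and `f(x̂) = 0`, then `u(x,t) ≤ g(t) - g(t̂) + u(x̂,t̂)` on `Z^η` (where `Z = {f ≤ 0}`)
and `f ≥ 0` on `U^η` (where `U = {u(·,t̂) ≥ u(x̂,t̂)}`). -/
theorem simple_facet_order (n : ℕ) (hn : 1 ≤ n)
    (u : EuclideanSpace ℝ (Fin n) × ℝ → ℝ)
    (f : EuclideanSpace ℝ (Fin n) → ℝ) (g : ℝ → ℝ)
    (xhat : EuclideanSpace ℝ (Fin n)) (that η : ℝ) (hη : 0 < η)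
    (hf : f xhat = 0)
    (hgp : ∀ x : EuclideanSpace ℝ (Fin n), ∀ t ∈ Set.Icc (that - η) (that + η),
      ∀ h : EuclideanSpace ℝ (Fin n), ‖h‖ ≤ η →
      u (x - h, t) - f x - g t ≤ u (xhat, that) - f xhat - g that) :
    (∀ x ∈ dil {x | f x ≤ 0} η, ∀ t ∈ Set.Icc (that - η) (that + η),
      u (x, t) ≤ g t - g that + u (xhat, that)) ∧
    (∀ x ∈ dil {x | u (xhat, that) ≤ u (x, that)} η, 0 ≤ f x) := by
  constructor
  · rintro x ⟨a, ha, h, hh, rfl⟩ t ht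
    have key := hgp a t ht (-h) (by simpa using hh)
    rw [sub_neg_eq_add] at key
    have ha' : f a ≤ 0 := ha
    linarith
  · rintro x ⟨a, ha, h, hh, rfl⟩
    have hthat : that ∈ Set.Icc (that - η) (that + η) := by
      constructor <;> linarith
    have := hgp (a + h) that hthat h hh
    have he : a + h - h = a := by abel
    rw [he] at this
    have ha' : u (xhat, that) ≤ u (a, that) := ha
    linarith
end

section
/- Let n ≥ 1, u : ℝ^n × ℝ → ℝ, f : ℝ^n → ℝ continuous, g : ℝ → ℝ, (x̂, t̂) ∈ ℝ^n × ℝ, η > 0 and ε ∈ (0,1); set δ := η/4. Assume f(x̂) = 0 and that the general-position inequality of radius η at (x̂, t̂) holds. Set U := { x : u(x, t̂) ≥ u(x̂, t̂) }, Z := { x : f(x) ≤ 0 } and N_ρ := U^{ρ} ∩ Z^{ρ} for ρ > 0. Then for every x ∈ N_η and every t ∈ [t̂ − η, t̂ + η] with (x,t) ∉ N_δ × {t̂}, one has the strict inequality u(x,t) − ε · min_{‖z‖ ≤ δ} f(x − z) − g(t) − |t − t̂|² < u(x̂, t̂) − g(t̂). -/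
/-- Strict maximum estimate: for `ε ∈ (0,1)`, `δ = η/4`, a test profile `f` (continuous,
vanishing at `x̂`) in general position of radius `η` with respect to `u` at `(x̂,t̂)` satisfies
the strict inequality
`u(x,t) - ε·min_{‖z‖≤δ} f(x-z) - g(t) - |t-t̂|² < u(x̂,t̂) - g(t̂)`
on `(N_η × [t̂-η, t̂+η]) \ (N_δ × {t̂})`, where `N_ρ = U^ρ ∩ Z^ρ`,
`U = {u(·,t̂) ≥ u(x̂,t̂)}`, `Z = {f ≤ 0}`. -/
theorem strictish_maximum (n : ℕ) (hn : 1 ≤ n)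
    (u : EuclideanSpace ℝ (Fin n) × ℝ → ℝ)
    (f : EuclideanSpace ℝ (Fin n) → ℝ) (hfc : Continuous f) (g : ℝ → ℝ)
    (xhat : EuclideanSpace ℝ (Fin n)) (that η ε : ℝ) (hη : 0 < η)
    (hε : ε ∈ Set.Ioo (0 : ℝ) 1)
    (hf : f xhat = 0)
    (hgp : ∀ x : EuclideanSpace ℝ (Fin n), ∀ t ∈ Set.Icc (that - η) (that + η),
      ∀ h : EuclideanSpace ℝ (Fin n), ‖h‖ ≤ η →
      u (x - h, t) - f x - g t ≤ u (xhat, that) - f xhat - g that) :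
    ∀ x ∈ dil {x | u (xhat, that) ≤ u (x, that)} η ∩ dil {x | f x ≤ 0} η,
      ∀ t ∈ Set.Icc (that - η) (that + η),
      ¬(x ∈ dil {x | u (xhat, that) ≤ u (x, that)} (η / 4) ∩ dil {x | f x ≤ 0} (η / 4) ∧
          t = that) →
      u (x, t) - ε * sInf ((fun z => f (x - z)) '' Metric.closedBall 0 (η / 4)) - g t -
          |t - that| ^ 2 <
        u (xhat, that) - g that := by
  rintro x ⟨hxU, aZ, haZ, hZ, hhZ, hxZ⟩ t ht hnot
  obtain ⟨hε0, hε1⟩ := hε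
  set δ : ℝ := η / 4 with hδdef
  have hδpos : 0 < δ := by positivity
  set S : Set ℝ := (fun z => f (x - z)) '' Metric.closedBall 0 δ with hS
  have hScomp : IsCompact S :=
    (isCompact_closedBall (0 : EuclideanSpace ℝ (Fin n)) δ).image
      (hfc.comp (continuous_const.sub continuous_id))
  have hSne : S.Nonempty :=
    ⟨f (x - 0), ⟨0, Metric.mem_closedBall_self hδpos.le, rfl⟩⟩
  set m : ℝ := sInf S with hm
  obtain ⟨z₀, hz₀ball, hz₀⟩ := hScomp.sInf_mem hSne
  have hz₀norm : ‖z₀‖ ≤ δ := by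
    simpa [Metric.mem_closedBall, dist_zero_right] using hz₀ball
  have hz₀' : f (x - z₀) = m := hz₀
  -- Fact 1: from x ∈ Z^η, u(x,s) - g s ≤ u(x̂,t̂) - g t̂ for all s ∈ Icc
  have fact1 : ∀ s ∈ Set.Icc (that - η) (that + η),
      u (x, s) - g s ≤ u (xhat, that) - g that := by
    intro s hs
    have hnorm : ‖aZ - x‖ ≤ η := by
      have : aZ - x = -hZ := by rw [hxZ]; abel
      rw [this, norm_neg]; exact hhZ
    have := hgp aZ s hs (aZ - x) hnorm
    have hax : aZ - (aZ - x) = x := by abel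
    rw [hax, hf] at this
    have hfa : f aZ ≤ 0 := haZ
    linarith
  -- Fact 2: u(x,t) - m - g t ≤ u(x̂,t̂) - g t̂
  have fact2 : u (x, t) - m - g t ≤ u (xhat, that) - g that := by
    have hnorm : ‖-z₀‖ ≤ η := by
      rw [norm_neg]; linarith
    have := hgp (x - z₀) t ht (-z₀) hnorm
    have hax : x - z₀ - (-z₀) = x := by abel
    rw [hax, hf] at this
    linarith [hz₀']
  have hsq : 0 ≤ |t - that| ^ 2 := sq_nonneg _
  rcases lt_or_ge 0 m with hmpos | hmle
  · -- m > 0 : use fact1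
    have := fact1 t ht
    nlinarith
  · -- m ≤ 0
    by_cases htt : t = that
    · -- t = t̂ : x ∉ N_δ, but x ∈ Z^δ via z₀, so x ∉ U^δ
      have habs0 : |t - that| = 0 := by rw [htt]; simp
      have hxZδ : x ∈ dil {x | f x ≤ 0} δ := by
        refine ⟨x - z₀, ?_, z₀, hz₀norm, by abel⟩
        show f (x - z₀) ≤ 0
        rw [hz₀']; exact hmle
      have hxUδ : x ∉ dil {x | u (xhat, that) ≤ u (x, that)} δ := by
        intro hmem
        exact hnot ⟨⟨hmem, hxZδ⟩, htt⟩
      have hlt : u (x, that) < u (xhat, that) := by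
        by_contra hcon
        push_neg at hcon
        exact hxUδ ⟨x, hcon, 0, by simp [hδpos.le], by simp⟩
      rw [htt] at fact2 ⊢
      simp only [sub_self, abs_zero]
      rcases lt_or_eq_of_le hmle with hmneg | hmzero
      · nlinarith
      · rw [← hmzero]
        nlinarith
    · -- t ≠ t̂ : |t - t̂|² > 0
      have habs : 0 < |t - that| := abs_pos.mpr (sub_ne_zero.mpr htt)
      have hsq' : 0 < |t - that| ^ 2 := by positivity
      nlinarith
end

section
/- Let n ≥ 1, u : ℝ^n × ℝ → ℝ, f : ℝ^n → ℝ, g : ℝ → ℝ, (x̂, t̂) ∈ ℝ^n × ℝ, η > 0 and δ := η/4. Assume f(x̂ − h) = 0 for all h with ‖h‖ ≤ η and that the general-position inequality of radius η at (x̂, t̂) holds. Set U := { x : u(x, t̂) ≥ u(x̂, t̂) }, Z := { x : f(x) ≤ 0 } and N_ρ := U^{ρ} ∩ Z^{ρ}. Let f_a : ℝ^n → ℝ, let z ∈ ℝ^n with ‖z‖ ≤ δ, and let (x_a, t_a) ∈ N_{2δ} × [t̂ − δ, t̂ + δ] be such that u(x,t) − f_a(x − z) − g(t) ≤ u(x_a,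 t_a) − f_a(x_a − z) − g(t_a) for all (x,t) ∈ N_{3δ} × [t̂ − 2δ, t̂ + 2δ]. Then f_a(x_a − z) − f(x_a − z) ≤ f_a(x̂ − z) − f(x̂ − z). -/
/-- Comparison of the perturbation at a maximizer with the value at the contact point:
if `(x_a, t_a)` maximizes `u(x,t) - f_a(x-z) - g(t)` over `N_{3δ} × [t̂-2δ, t̂+2δ]`
and lies in `N_{2δ} × [t̂-δ, t̂+δ]`, with `δ = η/4`, then
`f_a(x_a - z) - f(x_a - z) ≤ f_a(x̂ - z) - f(x̂ - z)`. -/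
theorem h_at_xa (n : ℕ) (hn : 1 ≤ n)
    (u : EuclideanSpace ℝ (Fin n) × ℝ → ℝ)
    (f : EuclideanSpace ℝ (Fin n) → ℝ) (g : ℝ → ℝ)
    (xhat : EuclideanSpace ℝ (Fin n)) (that η : ℝ) (hη : 0 < η)
    (hf : ∀ h : EuclideanSpace ℝ (Fin n), ‖h‖ ≤ η → f (xhat - h) = 0)
    (hgp : ∀ x : EuclideanSpace ℝ (Fin n), ∀ t ∈ Set.Icc (that - η) (that + η),
      ∀ h : EuclideanSpace ℝ (Fin n), ‖h‖ ≤ η →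
      u (x - h, t) - f x - g t ≤ u (xhat, that) - f xhat - g that)
    (fa : EuclideanSpace ℝ (Fin n) → ℝ)
    (z : EuclideanSpace ℝ (Fin n)) (hz : ‖z‖ ≤ η / 4)
    (xa : EuclideanSpace ℝ (Fin n)) (ta : ℝ)
    (hxa : xa ∈ dil {x | u (xhat, that) ≤ u (x, that)} (2 * (η / 4)) ∩
      dil {x | f x ≤ 0} (2 * (η / 4)))
    (hta : ta ∈ Set.Icc (that - η / 4) (that + η / 4))
    (hmaximizer : ∀ x ∈ dil {x | u (xhat, that) ≤ u (x, that)} (3 * (η / 4)) ∩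
        dil {x | f x ≤ 0} (3 * (η / 4)),
      ∀ t ∈ Set.Icc (that - 2 * (η / 4)) (that + 2 * (η / 4)),
      u (x, t) - fa (x - z) - g t ≤ u (xa, ta) - fa (xa - z) - g ta) :
    fa (xa - z) - f (xa - z) ≤ fa (xhat - z) - f (xhat - z) := by
  have hfx : f xhat = 0 := by simpa using hf 0 (by simp [hη.le])
  have hfxz : f (xhat - z) = 0 := hf z (by linarith)
  -- x̂ lies in N_{3δ}
  have hmem : xhat ∈ dil {x | u (xhat, that) ≤ u (x, that)} (3 * (η / 4)) ∩
      dil {x | f x ≤ 0} (3 * (η / 4)) := by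
    constructor
    · exact ⟨xhat, by simp, 0, by simp; linarith, by simp⟩
    · exact ⟨xhat, by simp [hfx], 0, by simp; linarith, by simp⟩
  have h1 := hmaximizer xhat hmem that ⟨by linarith, by linarith⟩
  have h2 : u (xa, ta) - f (xa - z) - g ta ≤ u (xhat, that) - f xhat - g that := by
    have := hgp (xa - z) ta ⟨by obtain ⟨l, r⟩ := hta; linarith, by
        obtain ⟨l, r⟩ := hta; linarith⟩ (-z) (by simpa using (by linarith : ‖z‖ ≤ η))
    simpa using this
  linarith
end

section
/- Calibrability of the annular facet: Let n ≥ 1 and 0 < R₊ < R₋. Set b := (R₋^{n−1} − R₊^{n−1})/(R₋^n − R₊^n), a := (R₊ R₋)^{n−1} (R₋ − R₊)/(R₋^n − R₊^n), θ(ρ) := a ρ^{1−n} + b ρ for ρ > 0, and z(x) := −θ(‖x‖) x/‖x‖ for x ∈ ℝ^n \ {0}. Then: (a) θ(R₊) = θ(R₋) = 1, and 0 < θ(ρ) ≤ 1 for every ρ ∈ [R₊, R₋]; consequently ‖z(x)‖ ≤ 1 for all x with R₊ ≤ ‖x‖ ≤ R₋, and ⟨z(x), x/‖x‖⟩ = −1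 whenever ‖x‖ = R₊ or ‖x‖ = R₋; (b) z is smooth on ℝ^n \ {0} and div z(x) = −n b = n (R₊^{n−1} − R₋^{n−1})/(R₋^n − R₊^n) for every x ≠ 0, a constant. -/
/-!
θ is a nonnegative combination of the convex functions ρ ↦ ρ^{1-n} and ρ ↦ ρ on (0, ∞), so on
[R₊, R₋] it is bounded by its endpoint values, and a, b are the solution of θ(R₊) = θ(R₋) = 1.
Away from the origin z(x) = φ(‖x‖) x with φ(ρ) = -(a ρ^{-n} + b), and a radial field
φ(‖x‖) x on an n-dimensional space has divergence n φ(ρ) + ρ φ'(ρ). This operator annihilates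
ρ^{-n} (the Newtonian field x/‖x‖^n is divergence free), which leaves -n b.
-/

open Set

theorem hasDerivAt_inv_pow (n : ℕ) {ρ : ℝ} (hρ : ρ ≠ 0) :
    HasDerivAt (fun ρ => (ρ ^ n)⁻¹) (-(n * (ρ ^ (n + 1))⁻¹)) ρ := by
  refine ((hasDerivAt_pow n ρ).inv (pow_ne_zero n hρ)).congr_deriv ?_
  rcases n with _ | m
  · simp
  · rw [Nat.add_sub_cancel]
    field_simp
    ring

section RadialField

variable {E : Type*} [NormedAddCommGroup E] [InnerProductSpace ℝ E]

theorem hasFDerivAt_norm_of_ne_zero {x : E} (hx : x ≠ 0) :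
    HasFDerivAt (‖·‖) (‖x‖⁻¹ • innerSL ℝ x) x := by
  have hx' : ‖x‖ ≠ 0 := norm_ne_zero_iff.mpr hx
  have h := (hasStrictFDerivAt_norm_sq x).hasFDerivAt.sqrt (pow_ne_zero 2 hx')
  simp only [Real.sqrt_sq (norm_nonneg _)] at h
  convert h using 1
  ext v
  simp only [smul_apply, innerSL_apply_apply, smul_eq_mul, nsmul_eq_mul, Nat.cast_ofNat]
  field_simp

theorem contDiffOn_radial_smul {k : WithTop ℕ∞} {φ : ℝ → ℝ} (hφ : ContDiffOn ℝ k φ (Ioi 0)) :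
    ContDiffOn ℝ k (fun y : E => φ ‖y‖ • y) {0}ᶜ := fun x hx =>
  ((hφ.contDiffAt (Ioi_mem_nhds (norm_pos_iff.mpr hx))).comp x (contDiffAt_norm ℝ hx)).smul
    contDiffAt_id |>.contDiffWithinAt

theorem trace_fderiv_radial_smul [FiniteDimensional ℝ E] {φ : ℝ → ℝ} {φ' : ℝ} {x : E}
    (hx : x ≠ 0) (hφ : HasDerivAt φ φ' ‖x‖) :
    LinearMap.trace ℝ E (fderiv ℝ (fun y => φ ‖y‖ • y) x) =
      Module.finrank ℝ E * φ ‖x‖ + ‖x‖ * φ' := by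
  have hderiv : HasFDerivAt (fun y => φ ‖y‖ • y) _ x :=
    (hφ.comp_hasFDerivAt x (hasFDerivAt_norm_of_ne_zero hx)).smul (hasFDerivAt_id x)
  set l : StrongDual ℝ E := φ' • ‖x‖⁻¹ • innerSL ℝ x
  have hcoe : ((l.smulRight x : E →L[ℝ] E) : E →ₗ[ℝ] E) = (l : E →ₗ[ℝ] ℝ).smulRight x := rfl
  have hlx : l x = ‖x‖ * φ' := by
    simp only [l, smul_apply, innerSL_apply_apply, real_inner_self_eq_norm_sq, smul_eq_mul]
    field_simp [norm_ne_zero_iff.mpr hx]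
  rw [hderiv.fderiv, ContinuousLinearMap.toLinearMap_add, ContinuousLinearMap.toLinearMap_smul,
    map_add, map_smul, ContinuousLinearMap.coe_id, LinearMap.trace_id, hcoe,
    LinearMap.trace_smulRight, ContinuousLinearMap.coe_coe, hlx, smul_eq_mul, mul_comm]
  rfl

theorem norm_neg_mul_inv_norm_smul {t : ℝ} (ht : 0 ≤ t) {x : E} (hx : x ≠ 0) :
    ‖-(t * ‖x‖⁻¹) • x‖ = t := by
  rw [norm_smul, norm_neg, norm_mul, Real.norm_of_nonneg ht, norm_inv, norm_norm,
    inv_mul_cancel_right₀ (norm_ne_zero_iff.mpr hx)]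

theorem inner_neg_mul_inv_norm_smul (t : ℝ) {x : E} (hx : x ≠ 0) :
    inner ℝ (-(t * ‖x‖⁻¹) • x) (‖x‖⁻¹ • x) = -t := by
  have hx' : ‖x‖ ≠ 0 := norm_ne_zero_iff.mpr hx
  rw [real_inner_smul_left, real_inner_smul_right, real_inner_self_eq_norm_sq]
  field_simp

theorem contDiffOn_inv_pow_radial_smul {k : WithTop ℕ∞} (n : ℕ) (a b : ℝ) :
    ContDiffOn ℝ k (fun y : E => (-(a * (‖y‖ ^ n)⁻¹ + b)) • y) {0}ᶜ :=
  contDiffOn_radial_smul (φ := fun ρ => -(a * (ρ ^ n)⁻¹ + b)) <|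
    ((contDiffOn_const.mul ((contDiffOn_id.pow n).inv
      fun ρ (hρ : 0 < ρ) => pow_ne_zero n hρ.ne')).add contDiffOn_const).neg

theorem trace_fderiv_inv_pow_radial_smul [FiniteDimensional ℝ E] {n : ℕ}
    (hE : Module.finrank ℝ E = n) (a b : ℝ) {x : E} (hx : x ≠ 0) :
    LinearMap.trace ℝ E (fderiv ℝ (fun y => (-(a * (‖y‖ ^ n)⁻¹ + b)) • y) x) = -(n * b) := by
  have hx' : ‖x‖ ≠ 0 := norm_ne_zero_iff.mpr hx
  have hφ : HasDerivAt (fun ρ => -(a * (ρ ^ n)⁻¹ + b)) _ ‖x‖ :=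
    (((hasDerivAt_inv_pow n hx').const_mul a).add_const b).neg
  rw [trace_fderiv_radial_smul hx hφ, hE, pow_succ]
  field_simp
  ring

end RadialField

section AnnulusProfile

noncomputable def annulusProfile (n : ℕ) (a b ρ : ℝ) : ℝ := a * (ρ ^ (n - 1))⁻¹ + b * ρ

variable {n : ℕ} {a b : ℝ}

theorem annulusProfile_pos (ha : 0 < a) (hb : 0 ≤ b) {ρ : ℝ} (hρ : 0 < ρ) :
    0 < annulusProfile n a b ρ := by
  unfold annulusProfile; positivity

theorem convexOn_annulusProfile (ha : 0 ≤ a) (hb : 0 ≤ b) :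
    ConvexOn ℝ (Ioi 0) (annulusProfile n a b) := by
  have h_eq :
      annulusProfile n a b = (fun ρ => a • ρ ^ (-((n - 1 : ℕ) : ℤ))) + fun ρ => b • id ρ := by
    ext ρ
    simp [annulusProfile, zpow_neg]
  rw [h_eq]
  exact ((convexOn_zpow _).smul ha).add ((convexOn_id (convex_Ioi 0)).smul hb)

theorem annulusProfile_mul_inv (hn : n ≠ 0) {ρ : ℝ} (hρ : ρ ≠ 0) :
    annulusProfile n a b ρ * ρ⁻¹ = a * (ρ ^ n)⁻¹ + b := by
  rw [annulusProfile, ← pow_sub_one_mul hn]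
  field_simp

theorem annulusProfile_eq_one {Rp Rm : ℝ} (hn : n ≠ 0) (hRp : Rp ≠ 0) (hRm : Rm ≠ 0)
    (hR : Rm ^ n - Rp ^ n ≠ 0)
    (hb : b = (Rm ^ (n - 1) - Rp ^ (n - 1)) / (Rm ^ n - Rp ^ n))
    (ha : a = (Rp * Rm) ^ (n - 1) * (Rm - Rp) / (Rm ^ n - Rp ^ n)) :
    annulusProfile n a b Rp = 1 ∧ annulusProfile n a b Rm = 1 := by
  obtain ⟨m, rfl⟩ := Nat.exists_eq_add_one_of_ne_zero hn
  simp only [annulusProfile, Nat.add_sub_cancel, ha, hb]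
  constructor <;> field_simp <;> ring

theorem annulus_coeffs_pos {Rp Rm : ℝ} (hRp : 0 < Rp) (hRR : Rp < Rm) (hn : n ≠ 0)
    (hb : b = (Rm ^ (n - 1) - Rp ^ (n - 1)) / (Rm ^ n - Rp ^ n))
    (ha : a = (Rp * Rm) ^ (n - 1) * (Rm - Rp) / (Rm ^ n - Rp ^ n)) :
    0 < a ∧ 0 ≤ b := by
  have hD : 0 < Rm ^ n - Rp ^ n := sub_pos.mpr (pow_lt_pow_left₀ hRR hRp.le hn)
  have hRR' : 0 < Rm - Rp := sub_pos.mpr hRR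
  have hpow : 0 ≤ Rm ^ (n - 1) - Rp ^ (n - 1) := sub_nonneg.mpr (pow_le_pow_left₀ hRp.le hRR.le _)
  subst ha hb
  have hRm : 0 < Rm := hRp.trans hRR
  exact ⟨div_pos (mul_pos (by positivity) hRR') hD, div_nonneg hpow hD.le⟩

theorem annulusProfile_mem_Ioc {Rp Rm : ℝ} (ha : 0 < a) (hb : 0 ≤ b) (hRp : 0 < Rp)
    (hRR : Rp ≤ Rm) (hθRp : annulusProfile n a b Rp = 1) (hθRm : annulusProfile n a b Rm = 1)
    {ρ : ℝ} (hρ : ρ ∈ Icc Rp Rm) : annulusProfile n a b ρ ∈ Ioc 0 1 := by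
  refine ⟨annulusProfile_pos ha hb (hRp.trans_le hρ.1), ?_⟩
  have hseg : ρ ∈ segment ℝ Rp Rm := by rwa [segment_eq_Icc hRR]
  calc annulusProfile n a b ρ
      ≤ max (annulusProfile n a b Rp) (annulusProfile n a b Rm) :=
        (convexOn_annulusProfile ha.le hb).le_on_segment hRp (hRp.trans_le hRR) hseg
    _ = 1 := by rw [hθRp, hθRm, max_self]

theorem annulusProfile_mul_inv_smul (hn : n ≠ 0) {E : Type*} [NormedAddCommGroup E]
    [NormedSpace ℝ E] (y : E) :
    -(annulusProfile n a b ‖y‖ * ‖y‖⁻¹) • y = (-(a * (‖y‖ ^ n)⁻¹ + b)) • y := by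
  rcases eq_or_ne y 0 with rfl | hy
  · simp
  · rw [annulusProfile_mul_inv hn (norm_ne_zero_iff.mpr hy)]

end AnnulusProfile

/-- Calibrability of the annular facet `{R₊ ≤ ‖x‖ ≤ R₋}`: the explicit Cahn–Hoffman vector
field `z(x) = -θ(‖x‖) x/‖x‖` with `θ(ρ) = a ρ^{1-n} + b ρ` has norm at most `1` on the
annulus, the correct normal traces on both boundary spheres, and constant divergence
`-n b = n (R₊^{n-1} - R₋^{n-1})/(R₋^n - R₊^n)`. -/
theorem annulus_calibrable (n : ℕ) (hn : 1 ≤ n) (Rp Rm : ℝ) (hRp : 0 < Rp) (hRR : Rp < Rm)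
    (b a : ℝ)
    (hb : b = (Rm ^ (n - 1) - Rp ^ (n - 1)) / (Rm ^ n - Rp ^ n))
    (ha : a = (Rp * Rm) ^ (n - 1) * (Rm - Rp) / (Rm ^ n - Rp ^ n))
    (θ : ℝ → ℝ) (hθ : ∀ ρ : ℝ, θ ρ = a * (ρ ^ (n - 1))⁻¹ + b * ρ)
    (z : EuclideanSpace ℝ (Fin n) → EuclideanSpace ℝ (Fin n))
    (hz : ∀ x : EuclideanSpace ℝ (Fin n), z x = -(θ ‖x‖ * ‖x‖⁻¹) • x) :
    (θ Rp = 1 ∧ θ Rm = 1) ∧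
    (∀ ρ ∈ Set.Icc Rp Rm, 0 < θ ρ ∧ θ ρ ≤ 1) ∧
    (∀ x : EuclideanSpace ℝ (Fin n), Rp ≤ ‖x‖ → ‖x‖ ≤ Rm → ‖z x‖ ≤ 1) ∧
    (∀ x : EuclideanSpace ℝ (Fin n), ‖x‖ = Rp ∨ ‖x‖ = Rm →
      (inner ℝ (z x) (‖x‖⁻¹ • x) : ℝ) = -1) ∧
    ContDiffOn ℝ (⊤ : ℕ∞) z {(0 : EuclideanSpace ℝ (Fin n))}ᶜ ∧
    (∀ x : EuclideanSpace ℝ (Fin n), x ≠ 0 →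
      LinearMap.trace ℝ (EuclideanSpace ℝ (Fin n)) (fderiv ℝ z x).toLinearMap =
        -((n : ℝ) * b)) ∧
    -((n : ℝ) * b) = (n : ℝ) * (Rp ^ (n - 1) - Rm ^ (n - 1)) / (Rm ^ n - Rp ^ n) := by
  have hn₀ : n ≠ 0 := by omega
  have hRm : 0 < Rm := hRp.trans hRR
  obtain rfl : θ = annulusProfile n a b := funext hθ
  obtain ⟨ha₀, hb₀⟩ := annulus_coeffs_pos hRp hRR hn₀ hb ha
  obtain ⟨hθRp, hθRm⟩ := annulusProfile_eq_one hn₀ hRp.ne' hRm.ne'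
    (sub_pos.mpr (pow_lt_pow_left₀ hRR hRp.le hn₀)).ne' hb ha
  have hθ_bound : ∀ ρ ∈ Icc Rp Rm, annulusProfile n a b ρ ∈ Ioc 0 1 :=
    fun ρ => annulusProfile_mem_Ioc ha₀ hb₀ hRp hRR.le hθRp hθRm
  have hz_radial : z = fun y => (-(a * (‖y‖ ^ n)⁻¹ + b)) • y :=
    funext fun y => (hz y).trans (annulusProfile_mul_inv_smul hn₀ y)
  refine ⟨⟨hθRp, hθRm⟩, hθ_bound, fun x h₁ h₂ => ?_, fun x hx => ?_, ?_, fun x hx => ?_, ?_⟩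
  · obtain ⟨hθ_pos, hθ_le⟩ := hθ_bound _ ⟨h₁, h₂⟩
    rwa [hz, norm_neg_mul_inv_norm_smul hθ_pos.le (norm_pos_iff.mp (hRp.trans_le h₁))]
  · have hx₀ : x ≠ 0 := norm_pos_iff.mp (by rcases hx with h | h <;> rw [h] <;> positivity)
    have hθx : annulusProfile n a b ‖x‖ = 1 := by rcases hx with h | h <;> rw [h] <;> assumption
    rw [hz, inner_neg_mul_inv_norm_smul _ hx₀, hθx]
  · exact hz_radial ▸ contDiffOn_inv_pow_radial_smul n a b
  · rw [hz_radial]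
    exact trace_fderiv_inv_pow_radial_smul finrank_euclideanSpace_fin a b hx
  · rw [hb]; ring
end

section
/- Construction of faceted test functions dominating a subsolution: Let n ≥ 1, r > 0, let I ⊆ ℝ, let u : ℝ^n × ℝ → ℝ be bounded above, let G : ℝ → ℝ be bounded below on I, and let ψ : ℝ^n → ℝ be bounded. Let M₁, M₂, M₃ ⊆ ℝ^n satisfy M₁ ∪ M₂ ∪ M₃ = ℝ^n, and assume: (i) inf { ψ(x − h) : x ∈ M₁, ‖h‖ ≤ r } > 0; (ii) for every x ∈ M₂ and every h with ‖h‖ ≤ r one has ψ(x − h) ≥ 0, and u(x,t) ≤ G(t) for every x ∈ M₂ and t ∈ I; (iii) there exists s₀ > 0 with u(x,t) ≤ G(t) − s₀ for every x ∈ M₃ and t ∈ I. Then there exist constants λ > 0 and μ > 0 such that u(x,t) ≤ λ [ψ(x − h)]₊ − μ [ψ(x − h)]₋ + G(t) for all x ∈ ℝ^n, all t ∈ I and all h with ‖h‖ ≤ r. -/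
/-- Construction of faceted test functions dominating a subsolution: under the covering
`M₁ ∪ M₂ ∪ M₃ = ℝⁿ` and the hypotheses (i)–(iii), there exist constants `λ, μ > 0` such that
`u(x,t) ≤ λ [ψ(x-h)]₊ - μ [ψ(x-h)]₋ + G(t)` for all `x`, all `t ∈ I` and all `‖h‖ ≤ r`. -/
theorem faceted_test_construction (n : ℕ) (hn : 1 ≤ n) (r : ℝ) (hr : 0 < r) (I : Set ℝ)
    (u : EuclideanSpace ℝ (Fin n) × ℝ → ℝ) (G : ℝ → ℝ)
    (ψ : EuclideanSpace ℝ (Fin n) → ℝ)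
    (hub : ∃ C : ℝ, ∀ (x : EuclideanSpace ℝ (Fin n)) (t : ℝ), u (x, t) ≤ C)
    (hGb : ∃ c : ℝ, ∀ t ∈ I, c ≤ G t)
    (hψb : ∃ C : ℝ, ∀ x : EuclideanSpace ℝ (Fin n), |ψ x| ≤ C)
    (M₁ M₂ M₃ : Set (EuclideanSpace ℝ (Fin n)))
    (hcover : M₁ ∪ M₂ ∪ M₃ = Set.univ)
    (h1 : ∃ c > (0 : ℝ), ∀ x ∈ M₁, ∀ h : EuclideanSpace ℝ (Fin n), ‖h‖ ≤ r →
      c ≤ ψ (x - h))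
    (h2 : ∀ x ∈ M₂, (∀ h : EuclideanSpace ℝ (Fin n), ‖h‖ ≤ r → 0 ≤ ψ (x - h)) ∧
      ∀ t ∈ I, u (x, t) ≤ G t)
    (h3 : ∃ s₀ > (0 : ℝ), ∀ x ∈ M₃, ∀ t ∈ I, u (x, t) ≤ G t - s₀) :
    ∃ lam > (0 : ℝ), ∃ μ > (0 : ℝ), ∀ x : EuclideanSpace ℝ (Fin n), ∀ t ∈ I,
      ∀ h : EuclideanSpace ℝ (Fin n), ‖h‖ ≤ r →
      u (x, t) ≤ lam * max (ψ (x - h)) 0 - μ * max (-ψ (x - h)) 0 + G t := by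
  obtain ⟨C, hC⟩ := hub
  obtain ⟨c, hc⟩ := hGb
  obtain ⟨Cψ, hCψ⟩ := hψb
  obtain ⟨c₁, hc₁, H1⟩ := h1
  obtain ⟨s₀, hs₀, H3⟩ := h3
  have hCψ0 : 0 ≤ Cψ := le_trans (abs_nonneg _) (hCψ 0)
  set lam : ℝ := max ((C - c) / c₁) 0 + 1 with hlam
  set μ : ℝ := s₀ / (Cψ + 1) with hμ
  have hlam0 : 0 < lam := by positivity
  have hμ0 : 0 < μ := by positivity
  refine ⟨lam, hlam0, μ, hμ0, fun x t ht h hh => ?_⟩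
  have hx : x ∈ M₁ ∪ M₂ ∪ M₃ := by rw [hcover]; trivial
  rcases hx with hx | hx
  · rcases hx with hx | hx
    · -- x ∈ M₁
      have hψc : c₁ ≤ ψ (x - h) := H1 x hx h hh
      have hpos : 0 < ψ (x - h) := lt_of_lt_of_le hc₁ hψc
      have hmax : max (ψ (x - h)) 0 = ψ (x - h) := max_eq_left hpos.le
      have hmax2 : max (-ψ (x - h)) 0 = 0 := max_eq_right (by linarith)
      rw [hmax, hmax2, mul_zero, sub_zero]
      have h1 : C - c ≤ lam * c₁ := by
        have : (C - c) / c₁ ≤ lam := by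
          rw [hlam]; exact le_add_of_le_of_nonneg (le_max_left _ _) zero_le_one
        calc C - c = (C - c) / c₁ * c₁ := by field_simp
          _ ≤ lam * c₁ := by nlinarith
      have h2 : lam * c₁ ≤ lam * ψ (x - h) := by nlinarith
      have := hC x t
      have := hc t ht
      linarith
    · -- x ∈ M₂
      obtain ⟨hψnn, hu⟩ := h2 x hx
      have h0 : 0 ≤ ψ (x - h) := hψnn h hh
      have hmax : max (ψ (x - h)) 0 = ψ (x - h) := max_eq_left h0
      have hmax2 : max (-ψ (x - h)) 0 = 0 := max_eq_right (by linarith)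
      rw [hmax, hmax2, mul_zero, sub_zero]
      have := hu t ht
      nlinarith
  · -- x ∈ M₃
    have hu := H3 x hx t ht
    have hneg : max (-ψ (x - h)) 0 ≤ Cψ := by
      have := hCψ (x - h)
      rcases le_or_gt (-ψ (x - h)) 0 with h' | h'
      · rw [max_eq_right h']; exact hCψ0
      · rw [max_eq_left h'.le]; cases abs_le.mp this; linarith
    have hμb : μ * max (-ψ (x - h)) 0 ≤ s₀ := by
      have : μ * max (-ψ (x - h)) 0 ≤ μ * Cψ := by
        apply mul_le_mul_of_nonneg_left hneg hμ0.le
      have h2 : μ * Cψ ≤ s₀ := by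
        rw [hμ, div_mul_eq_mul_div, div_le_iff₀ (by linarith)]
        nlinarith
      linarith
    have hpos : 0 ≤ lam * max (ψ (x - h)) 0 := by positivity
    linarith
end
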